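/- For every n ≥ 1, the identity ∏_{i=1}^{n} ∏_{j=0}^{∞} (1 + z x_i q^j) = Σ_μ q^{n(μ')} z^{|μ|} m_μ(x_1,…,x_n) / ∏_i (q;q)_{μ_i} holds in the formal power series ring ℚ[x_1,…,x_n][[q,z]], where the sum runs over all partitions μ with at most n parts and n(μ') = Σ_i μ_i(μ_i−1)/2. -/

import Mathlib

/-!
Each factor `∏_{j<M} (1 + x_i z q^j)` is expanded by the finite `q`-binomial theorem as
`∑_k [M choose k]_q q^{k(k-1)/2} (x_i z)^k`. Since `[M choose k]_q (q;q)_k ≡ 1 mod q^{M+1-k}`,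
the factor agrees modulo `q^M` with the truncated Euler series
`∑_k q^{k(k-1)/2} (x_i z)^k / (q;q)_k`, and a multiple of `q^M` does not affect the
coefficients of `q`-degree `< M`.

Multiplying out the `n` series gives a sum over exponent vectors `p ∈ ℕ^n` whose terms are
`z^{|p|} x^p` times a factor depending only on the multiset of entries of `p`. Only `|p| = d_z`
contributes to the coefficient, and grouping those `p` by the partition `μ` of their nonzero
entries collects `∑ x^p` over the `S_n`-orbit of `μ`, which is `m_μ`: the orbit sum over `S_n`
counts every rearrangement once per element of the stabilizer of `μ`, whose order is
`∏_i m_i(μ)!`.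
-/

namespace KHL

/-- `conjC l j` is the `j`-th part (1-based) of the conjugate of the partition `l`. -/
def conjC (l : List ℕ) (j : ℕ) : ℕ := (l.filter (fun x => j ≤ x)).length

/-- `nstat λ = n(λ) = Σ_{i≥1} (i-1)·λ_i`. -/
def nstat (l : List ℕ) : ℕ := ∑ i ∈ Finset.range l.length, i * l.getD i 0

/-- The Gaussian binomial coefficient `[n choose k]_q` as a polynomial in `ℤ[q]`. -/
noncomputable def qbinom : ℕ → ℕ → Polynomial ℤ
  | _, 0 => 1
  | 0, _ + 1 => 0
  | n + 1, k + 1 => qbinom n k + Polynomial.X ^ (k + 1) * qbinom n (k + 1)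

/-- The finset of all partitions of `n`, as weakly decreasing lists of positive integers. -/
noncomputable def partitionsOf (n : ℕ) : Finset (List ℕ) :=
  Finset.image (fun p : Nat.Partition n => (Multiset.sort p.parts (· ≤ ·)).reverse) Finset.univ

/-- The conjugate partition, as a list. -/
def conjList (l : List ℕ) : List ℕ := (List.range (l.headD 0)).map fun j => conjC l (j + 1)

/-- A semistandard Young tableau of shape `sh` (a partition, as a list of row lengths);
entries are positive inside the diagram (cell `(i,j)` with `j < sh_i`), `0` outside;
rows weakly increase, columns strictly increase. -/
structure SSYT (sh : List ℕ) where
  entry : ℕ → ℕ → ℕ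
  zero_outside : ∀ i j, sh.getD i 0 ≤ j → entry i j = 0
  pos_inside : ∀ i j, j < sh.getD i 0 → 1 ≤ entry i j
  row_weak : ∀ i j, j + 1 < sh.getD i 0 → entry i j ≤ entry i (j + 1)
  col_strict : ∀ i j, j < sh.getD (i + 1) 0 → entry i j < entry (i + 1) j

/-- The filling `f` of shape `sh` has weight `mu`: the entry `k+1` occurs `mu_{k+1}` times. -/
def WtIs (sh : List ℕ) (f : ℕ → ℕ → ℕ) (mu : List ℕ) : Prop :=
  ∀ k, {p : ℕ × ℕ | p.2 < sh.getD p.1 0 ∧ f p.1 p.2 = k + 1}.ncard = mu.getD k 0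

/-- The Kostka number `K_{ημ}`: the number of SSYT of shape `η` and weight `μ`. -/
noncomputable def kostka (eta mu : List ℕ) : ℕ :=
  Nat.card {T : SSYT eta // WtIs eta T.entry mu}

/- ### The Lascoux–Schützenberger charge -/

/-- charge of a standard word, given the positions of the letters `1, 2, …` in order:
letter 1 has index 0, and the index of `r+1` equals that of `r`, plus one if `r+1`
is located to the right of `r`; the charge is the sum of the indices. -/
def chargeStdAux : ℕ → ℕ → List ℕ → ℕ
  | _, _, [] => 0
  | prev, ind, p :: rest =>
    let ind' := if prev < p then ind + 1 else ind
    ind' + chargeStdAux p ind' rest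

def chargeStd : List ℕ → ℕ
  | [] => 0
  | p :: rest => chargeStdAux p 0 rest

/-- positions of a word of length `n`, read leftwards starting just left of `s`, cyclically. -/
def cycOrder (n s : ℕ) : List ℕ := (List.range s).reverse ++ (List.range' s (n - s)).reverse

/-- first position, leftwards-cyclically from `s`, carrying the letter `l`. -/
def findCyc (w : List ℕ) (l s : ℕ) : Option ℕ :=
  (cycOrder w.length s).find? fun i => w.getD i 0 = l

def extractAux (w : List ℕ) : ℕ → ℕ → ℕ → List ℕ
  | 0, _, _ => []
  | fuel + 1, s, l =>
    match findCyc w l s with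
    | none => []
    | some p => p :: extractAux w fuel p (l + 1)

/-- positions of the extracted standard subword: the rightmost `1`, then cyclically
leftwards the first `2`, then the first `3`, etc. -/
def extract (w : List ℕ) : List ℕ :=
  if 1 ∈ w then
    (w.length - 1 - (w.reverse.findIdx (· = 1))) ::
      extractAux w (w.foldr max 0) (w.length - 1 - (w.reverse.findIdx (· = 1))) 2
  else []

def removeIdx (w : List ℕ) (I : List ℕ) : List ℕ :=
  ((w.zipIdx.map Prod.swap).filter fun p => p.1 ∉ I).map Prod.snd

def chargeAux : ℕ → List ℕ → ℕ
  | 0, _ => 0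
  | fuel + 1, w =>
    if (extract w).isEmpty then 0
    else chargeStd (extract w) + chargeAux fuel (removeIdx w (extract w))

/-- The Lascoux–Schützenberger charge of a word (of partition weight): the sum of the
charges of the successively extracted standard subwords. -/
def charge (w : List ℕ) : ℕ := chargeAux w.length w

/-- The reading word of a tableau: rows read left to right, starting from the bottom row. -/
def readingWord {sh : List ℕ} (T : SSYT sh) : List ℕ :=
  ((List.range sh.length).reverse.map fun i =>
    (List.range (sh.getD i 0)).map fun j => T.entry i j).flatten

/-- The Kostka–Foulkes polynomial `K_{ηλ}(t) = Σ_T t^{c(T)}`, summed over all SSYT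
of shape `η` and weight `λ`, where `c` is the Lascoux–Schützenberger charge. -/
noncomputable def kostkaFoulkes (eta lam : List ℕ) : Polynomial ℤ :=
  ∑ᶠ T : {T : SSYT eta // WtIs eta T.entry lam}, Polynomial.X ^ charge (readingWord T.1)

/-- `𝒫_{λμ}(t) = Σ_η K_{ημ} K_{ηλ}(t)`, summed over all partitions `η` of `|λ|`. -/
noncomputable def Pcal (lam mu : List ℕ) : Polynomial ℤ :=
  ∑ eta ∈ partitionsOf lam.sum, (kostka eta mu : Polynomial ℤ) * kostkaFoulkes eta lam

/-- `ℛ_{λμ}(t) = Σ_η K_{ημ} K_{η'λ}(t)`, summed over all partitions `η` of `|λ|`. -/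
noncomputable def Rcal (lam mu : List ℕ) : Polynomial ℤ :=
  ∑ eta ∈ partitionsOf lam.sum,
    (kostka eta mu : Polynomial ℤ) * kostkaFoulkes (conjList eta) lam


section Stmt2

/-- The monomial symmetric polynomial `m_μ(x_1,…,x_n)` over `ℚ`, written as the orbit
sum `Σ_{w ∈ S_n} x_{w(1)}^{μ_1} ⋯ x_{w(n)}^{μ_n}` divided by the order of the
stabilizer (`m_i(μ)` being the multiplicity of the part `i` in `μ`, with
`m_0(μ) = n − ℓ(μ)`). -/
noncomputable def mSymQ (n : ℕ) (mu : List ℕ) : MvPolynomial (Fin n) ℚ :=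
  MvPolynomial.C (((∏ i ∈ Finset.range (mu.headD 0 + 1),
        Nat.factorial (if i = 0 then n - mu.length else mu.count i) : ℕ) : ℚ))⁻¹ *
    ∑ w : Equiv.Perm (Fin n), ∏ i : Fin n, MvPolynomial.X (w i) ^ mu.getD i 0

open Finset

section QBinomial

open Polynomial

variable {R : Type*} [CommRing R]

def qPoch (q : R) (k : ℕ) : R := ∏ j ∈ Icc 1 k, (1 - q ^ j)

theorem qPoch_zero (q : R) : qPoch q 0 = 1 := by simp [qPoch]

theorem qPoch_succ (q : R) (k : ℕ) : qPoch q (k + 1) = qPoch q k * (1 - q ^ (k + 1)) :=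
  prod_Icc_succ_top (by omega) _

theorem qbinom_zero_right (M : ℕ) : qbinom M 0 = 1 := by cases M <;> rfl

theorem qbinom_of_lt : ∀ {M k : ℕ}, M < k → qbinom M k = 0
  | 0, _ + 1, _ => rfl
  | M + 1, k + 1, h => by rw [qbinom, qbinom_of_lt (by omega), qbinom_of_lt (by omega)]; simp

theorem choose_two_succ (k : ℕ) : (k + 1).choose 2 = k.choose 2 + k := by
  simp [Nat.choose_succ_succ, add_comm]

theorem prod_one_add_mul_pow_eq_sum_qbinom (q t : R) (M : ℕ) :
    ∏ j ∈ range M, (1 + t * q ^ j) =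
      ∑ k ∈ range (M + 1), aeval q (qbinom M k) * q ^ k.choose 2 * t ^ k := by
  induction M generalizing t with
  | zero => simp [qbinom_zero_right]
  | succ M ih =>
    -- split off the factor `j = 0` and apply the induction hypothesis at `t q`
    have hshift : ∏ j ∈ range (M + 1), (1 + t * q ^ j) =
        (1 + t) * ∏ j ∈ range M, (1 + t * q * q ^ j) := by
      rw [prod_range_succ', mul_comm]
      simp [pow_succ', mul_assoc]
    set b : ℕ → R := fun k => aeval q (qbinom M k) * q ^ k.choose 2 * (t * q) ^ k
    have hb : ∑ k ∈ range (M + 1), b (k + 1) = ∑ k ∈ range (M + 1), b k - 1 := by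
      have h := sum_range_succ' b (M + 1)
      simp only [sum_range_succ _ (M + 1), b, qbinom_of_lt (Nat.lt_succ_self M),
        qbinom_zero_right, map_zero, map_one, Nat.choose_zero_succ] at h
      simp only [b]
      linear_combination -h
    have hterm : ∀ k, aeval q (qbinom (M + 1) (k + 1)) * q ^ (k + 1).choose 2 * t ^ (k + 1) =
        t * b k + b (k + 1) := by
      intro k
      simp only [b, qbinom, map_add, map_mul, map_pow, aeval_X, choose_two_succ]
      ring
    rw [hshift, ih, sum_range_succ' (fun k => aeval q (qbinom (M + 1) k) * q ^ k.choose 2 * t ^ k),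
      sum_congr rfl fun k _ => hterm k, sum_add_distrib, ← mul_sum, hb]
    simp only [qbinom_zero_right, map_one, Nat.choose_zero_succ, pow_zero, mul_one, b]
    ring

-- For `k > M` the exponent `M + 1 - k` truncates to `0` and the claim is trivial; this is what
-- lets the induction step call itself at `(M, M + 1)`.
theorem pow_dvd_aeval_qbinom_mul_qPoch_sub_one (q : R) :
    ∀ M k : ℕ, q ^ (M + 1 - k) ∣ aeval q (qbinom M k) * qPoch q k - 1
  | M, 0 => by simp [qbinom_zero_right, qPoch_zero]
  | 0, k + 1 => by simp
  | M + 1, k + 1 => by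
    have h₁ := pow_dvd_aeval_qbinom_mul_qPoch_sub_one q M k
    have h₂ := pow_dvd_aeval_qbinom_mul_qPoch_sub_one q M (k + 1)
    have key : aeval q (qbinom (M + 1) (k + 1)) * qPoch q (k + 1) - 1 =
        (aeval q (qbinom M k) * qPoch q k - 1) * (1 - q ^ (k + 1)) +
          q ^ (k + 1) * (aeval q (qbinom M (k + 1)) * qPoch q (k + 1) - 1) := by
      rw [qbinom, map_add, map_mul, map_pow, aeval_X, qPoch_succ]
      ring
    rw [key, show M + 1 + 1 - (k + 1) = M + 1 - k by omega]
    have h₃ : q ^ (M + 1 - k) ∣ q ^ (k + 1) * q ^ (M + 1 - (k + 1)) := by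
      rw [← pow_add]
      exact pow_dvd_pow q (by omega)
    exact dvd_add (dvd_mul_of_dvd_left h₁ _) (h₃.trans (mul_dvd_mul_left _ h₂))

theorem pow_dvd_aeval_qbinom_sub {q F : R} {k : ℕ} (hF : qPoch q k * F = 1) (M : ℕ) :
    q ^ (M + 1 - k) ∣ aeval q (qbinom M k) - F := by
  have h : aeval q (qbinom M k) - F = (aeval q (qbinom M k) * qPoch q k - 1) * F := by
    linear_combination -aeval q (qbinom M k) * hF
  rw [h]
  exact dvd_mul_of_dvd_left (pow_dvd_aeval_qbinom_mul_qPoch_sub_one q M k) F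

theorem le_choose_two_add_one (k : ℕ) : k ≤ k.choose 2 + 1 := by
  cases k with
  | zero => simp
  | succ k => rw [choose_two_succ]; omega

theorem prod_one_add_mul_pow_sModEq {q t : R} {F : ℕ → R} (hF : ∀ k, qPoch q k * F k = 1)
    {M N : ℕ} (hMN : M < N) :
    ∏ j ∈ range M, (1 + t * q ^ j) ≡ ∑ k ∈ range N, q ^ k.choose 2 * F k * t ^ k
      [SMOD Ideal.span {q ^ M}] := by
  rw [prod_one_add_mul_pow_eq_sum_qbinom, sum_subset (range_subset_range.2 hMN)]
  · refine SModEq.sum fun k _ => SModEq.sub_mem.2 (Ideal.mem_span_singleton.2 ?_)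
    have hdvd : q ^ M ∣ q ^ (M + 1 - k) * q ^ k.choose 2 := by
      rw [← pow_add]
      exact pow_dvd_pow q (by have := le_choose_two_add_one k; omega)
    have h : aeval q (qbinom M k) * q ^ k.choose 2 * t ^ k - q ^ k.choose 2 * F k * t ^ k =
        (aeval q (qbinom M k) - F k) * q ^ k.choose 2 * t ^ k := by ring
    rw [h]
    exact hdvd.trans
      (dvd_mul_of_dvd_left (mul_dvd_mul_right (pow_dvd_aeval_qbinom_sub (hF k) M) _) _)
  · intro k _ hk
    rw [qbinom_of_lt (by simpa using hk), map_zero, zero_mul, zero_mul]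

end QBinomial

section PowerSeries

open MvPowerSeries

variable {σ R : Type*} [CommRing R]

theorem coeff_eq_of_sModEq_X_pow {s : σ} {m : ℕ} {d : σ →₀ ℕ} {a b : MvPowerSeries σ R}
    (h : a ≡ b [SMOD Ideal.span {X s ^ m}]) (hd : d s < m) : coeff d a = coeff d b := by
  rw [← sub_eq_zero, ← map_sub]
  exact X_pow_dvd_iff.1 (Ideal.mem_span_singleton.1 (SModEq.sub_mem.1 h)) d hd

variable (R) in
def freeOf (s : σ) : Subring (MvPowerSeries σ R) where
  carrier := {f | ∀ e : σ →₀ ℕ, e s ≠ 0 → coeff e f = 0}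
  mul_mem' {f g} hf hg e he := by
    classical
    rw [coeff_mul]
    refine sum_eq_zero fun x hx => ?_
    rw [HasAntidiagonal.mem_antidiagonal] at hx
    have : x.1 s + x.2 s = e s := by rw [← hx, Finsupp.add_apply]
    by_cases h₁ : x.1 s = 0
    · rw [hg x.2 (by omega), mul_zero]
    · rw [hf x.1 h₁, zero_mul]
  one_mem' e he := by
    classical
    rw [coeff_one, if_neg]
    rintro rfl
    exact he rfl
  add_mem' hf hg e he := by rw [map_add, hf e he, hg e he, add_zero]
  zero_mem' e _ := map_zero _
  neg_mem' hf e he := by rw [map_neg, hf e he, neg_zero]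

variable {s : σ} {f : MvPowerSeries σ R}

theorem C_mem_freeOf (a : R) : C a ∈ freeOf R s := by
  classical
  intro e he
  rw [coeff_C, if_neg]
  rintro rfl
  exact he rfl

theorem X_mem_freeOf {t : σ} (h : t ≠ s) : X t ∈ freeOf R s := by
  classical
  intro e he
  rw [coeff_X, if_neg]
  rintro rfl
  exact he (Finsupp.single_eq_of_ne h.symm)

theorem invOfUnit_mem_freeOf (hf : f ∈ freeOf R s) (u : Rˣ) : invOfUnit f u ∈ freeOf R s := by
  classical
  intro e
  induction e using WellFoundedLT.induction with
  | ind e ih =>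
    intro he
    rw [coeff_invOfUnit, if_neg (by rintro rfl; exact he rfl)]
    refine mul_eq_zero_of_right _ (sum_eq_zero fun x hx => ?_)
    split_ifs with hlt
    · rw [HasAntidiagonal.mem_antidiagonal] at hx
      have : x.1 s + x.2 s = e s := by rw [← hx, Finsupp.add_apply]
      by_cases h₁ : x.1 s = 0
      · rw [ih x.2 hlt (by omega), mul_zero]
      · rw [hf x.1 h₁, zero_mul]
    · rfl

theorem coeff_X_pow_mul_of_mem_freeOf {g : MvPowerSeries σ R} (hg : g ∈ freeOf R s)
    {m : ℕ} {d : σ →₀ ℕ} (hm : m ≠ d s) : coeff d (X s ^ m * g) = 0 := by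
  classical
  rw [X_pow_eq, coeff_monomial_mul]
  split_ifs with hle
  · refine mul_eq_zero_of_right _ (hg _ ?_)
    have := hle s
    simp only [Finsupp.single_eq_same] at this
    simp only [Finsupp.tsub_apply, Finsupp.single_eq_same]
    omega
  · rfl

theorem constantCoeff_qPoch_X (s : σ) (k : ℕ) :
    constantCoeff (qPoch (X s : MvPowerSeries σ R) k) = 1 := by
  rw [qPoch, map_prod]
  refine prod_eq_one fun j hj => ?_
  have hj0 : j ≠ 0 := by rw [mem_Icc] at hj; omega
  rw [map_sub, map_one, map_pow, constantCoeff_X, zero_pow hj0, sub_zero]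

theorem qPoch_X_mul_invOfUnit (s : σ) (k : ℕ) :
    qPoch (X s : MvPowerSeries σ R) k * invOfUnit (qPoch (X s) k) 1 = 1 :=
  mul_invOfUnit _ _ (by rw [constantCoeff_qPoch_X, Units.val_one])

theorem qPoch_X_mem_freeOf {s t : σ} (h : t ≠ s) (k : ℕ) :
    qPoch (X t : MvPowerSeries σ R) k ∈ freeOf R s :=
  prod_mem fun j _ => sub_mem (one_mem _) (pow_mem (X_mem_freeOf h) j)

theorem invOfUnit_prod {ι : Type*} (t : Finset ι) (f : ι → MvPowerSeries σ R)
    (hf : ∀ i ∈ t, constantCoeff (f i) = 1) :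
    invOfUnit (∏ i ∈ t, f i) 1 = ∏ i ∈ t, invOfUnit (f i) 1 := by
  refine left_inv_eq_right_inv (invOfUnit_mul _ _ ?_) ?_
  · rw [map_prod, prod_eq_one hf, Units.val_one]
  · rw [← prod_mul_distrib]
    exact prod_eq_one fun i hi => mul_invOfUnit _ _ (by rw [hf i hi, Units.val_one])

end PowerSeries

section Rearrangements

open Equiv

theorem exists_perm_comp_eq {n : ℕ} {α : Type*} [LinearOrder α] {p v : Fin n → α}
    (h : univ.val.map p = univ.val.map v) : ∃ w : Perm (Fin n), v ∘ w = p := by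
  have hsort : p ∘ Tuple.sort p = v ∘ Tuple.sort v := by
    refine List.ofFn_injective (List.Perm.eq_of_sortedLE (Tuple.monotone_sort p).sortedLE_ofFn
      (Tuple.monotone_sort v).sortedLE_ofFn ?_)
    refine ((Tuple.sort p).ofFn_comp_perm p).trans (List.Perm.trans ?_
      ((Tuple.sort v).ofFn_comp_perm v).symm)
    rwa [← Multiset.coe_eq_coe, ← Fin.univ_val_map, ← Fin.univ_val_map]
  refine ⟨Tuple.sort v * (Tuple.sort p)⁻¹, funext fun i => ?_⟩
  simpa [Perm.mul_apply] using (congr_fun hsort ((Tuple.sort p)⁻¹ i)).symm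

variable {ι β : Type*} [Fintype ι] [DecidableEq ι] [DecidableEq β]

theorem card_comp_perm_eq_comp (v : ι → β) (w₀ : Perm ι) :
    #{w : Perm ι | v ∘ w = v ∘ w₀} = #{w : Perm ι | v ∘ w = v} := by
  refine card_nbij' (· * w₀⁻¹) (· * w₀) ?_ ?_ (fun w _ => by simp) (fun w _ => by simp)
  · intro w hw
    simp only [Set.mem_ofPred_eq, mem_univ, true_and, coe_filter] at hw ⊢
    rw [Perm.coe_mul, ← Function.comp_assoc, hw, Function.comp_assoc, ← Perm.coe_mul,
      mul_inv_cancel, Perm.coe_one, Function.comp_id]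
  · intro w hw
    simp only [Set.mem_ofPred_eq, mem_univ, true_and, coe_filter] at hw ⊢
    rw [Perm.coe_mul, ← Function.comp_assoc, hw]

theorem sum_comp_perm {M : Type*} [AddCommMonoid M] (v : ι → β)
    (g : (ι → β) → M) :
    ∑ w : Perm ι, g (v ∘ w) =
      #{w : Perm ι | v ∘ w = v} • ∑ p ∈ univ.image (fun w : Perm ι => v ∘ w), g p := by
  rw [Finset.sum_comp, smul_sum]
  refine sum_congr rfl fun p hp => ?_
  obtain ⟨w₀, -, rfl⟩ := mem_image.1 hp
  rw [card_comp_perm_eq_comp]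

end Rearrangements

section Partitions

variable {n m : ℕ} {μ : List ℕ}

theorem sortedGE_of_mem_partitionsOf (hμ : μ ∈ partitionsOf m) : μ.SortedGE := by
  obtain ⟨π, -, rfl⟩ := mem_image.1 hμ
  exact (Multiset.pairwise_sort _ _).sortedLE.reverse

theorem coe_eq_parts_of_mem_partitionsOf (hμ : μ ∈ partitionsOf m) :
    ∃ π : m.Partition, (μ : Multiset ℕ) = π.parts := by
  obtain ⟨π, -, rfl⟩ := mem_image.1 hμ
  exact ⟨π, by rw [Multiset.coe_reverse, Multiset.sort_eq]⟩

theorem zero_notMem_of_mem_partitionsOf (hμ : μ ∈ partitionsOf m) : 0 ∉ μ := by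
  obtain ⟨π, hπ⟩ := coe_eq_parts_of_mem_partitionsOf hμ
  intro h
  have := π.parts_pos (show 0 ∈ π.parts by rw [← hπ]; exact_mod_cast h)
  omega

theorem sum_of_mem_partitionsOf (hμ : μ ∈ partitionsOf m) : μ.sum = m := by
  obtain ⟨π, hπ⟩ := coe_eq_parts_of_mem_partitionsOf hμ
  rw [← Multiset.sum_coe, hπ, π.parts_sum]

theorem sort_coe_reverse_of_sortedGE (h : μ.SortedGE) :
    (Multiset.sort (μ : Multiset ℕ)).reverse = μ := by
  rw [List.reverse_eq_iff]
  refine List.Perm.eq_of_sortedLE (Multiset.pairwise_sort _ _).sortedLE h.reverse ?_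
  exact (Multiset.coe_eq_coe.1 (Multiset.sort_eq _ _)).trans (List.reverse_perm μ).symm

theorem getD_le_headD (h : μ.SortedGE) (i : ℕ) : μ.getD i 0 ≤ μ.headD 0 := by
  match μ, h with
  | [], _ => simp
  | a :: t, h =>
    cases i with
    | zero => simp
    | succ i =>
      rw [List.getD_cons_succ, List.headD_cons]
      rcases lt_or_ge i t.length with hi | hi
      · rw [List.getD_eq_getElem _ _ hi]
        exact List.rel_of_pairwise_cons h.pairwise (List.getElem_mem hi)
      · rw [List.getD_eq_default _ _ hi]
        exact Nat.zero_le a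

end Partitions

section PaddedTuple

open Equiv

variable {n : ℕ} {μ : List ℕ}

def paddedTuple (n : ℕ) (μ : List ℕ) : Fin n → ℕ := fun i => μ.getD i 0

theorem map_univ_paddedTuple (hlen : μ.length ≤ n) :
    univ.val.map (paddedTuple n μ) =
      (μ : Multiset ℕ) + Multiset.replicate (n - μ.length) 0 := by
  rw [Fin.univ_val_map, ← Multiset.coe_replicate, Multiset.coe_add]
  congr 1
  refine List.ext_getElem
    (by simp only [List.length_ofFn, List.length_append, List.length_replicate]; omega)
    fun i _ _ => ?_
  rw [List.getElem_ofFn]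
  rcases lt_or_ge i μ.length with hi | hi
  · rw [List.getElem_append_left hi, paddedTuple, List.getD_eq_getElem _ _ hi]
  · rw [List.getElem_append_right hi, List.getElem_replicate, paddedTuple,
      List.getD_eq_default _ _ hi]

theorem prod_paddedTuple {M : Type*} [CommMonoid M] (f : ℕ → M) (hf : f 0 = 1)
    (hlen : μ.length ≤ n) :
    ∏ i, f (paddedTuple n μ i) = ∏ i ∈ range μ.length, f (μ.getD i 0) := by
  simp only [paddedTuple]
  rw [Fin.prod_univ_eq_prod_range (fun i => f (μ.getD i 0))]
  refine (prod_subset (range_subset_range.2 hlen) fun i _ hi => ?_).symm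
  rw [List.getD_eq_default _ _ (by simpa using hi), hf]

theorem card_stabilizer_paddedTuple (hsort : μ.SortedGE) (h0 : 0 ∉ μ) (hlen : μ.length ≤ n) :
    #{w : Perm (Fin n) | paddedTuple n μ ∘ w = paddedTuple n μ} =
      ∏ i ∈ range (μ.headD 0 + 1),
        (if i = 0 then n - μ.length else μ.count i).factorial := by
  set v := paddedTuple n μ
  have hcount : ∀ c,
      Fintype.card {i // v i = c} = if c = 0 then n - μ.length else μ.count c := by
    intro c
    have : Fintype.card {i // v i = c} = Multiset.count c (univ.val.map v) := by
      rw [Multiset.count_map, Fintype.card_subtype]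
      simp only [eq_comm]
      rfl
    rw [this, map_univ_paddedTuple hlen, Multiset.count_add, Multiset.count_replicate,
      Multiset.coe_count]
    rcases eq_or_ne c 0 with rfl | hc
    · simp [List.count_eq_zero.2 h0]
    · simp [hc, hc.symm]
  have hsub : univ.image v ⊆ range (μ.headD 0 + 1) := by
    intro c hc
    obtain ⟨i, -, rfl⟩ := mem_image.1 hc
    exact mem_range.2 (Nat.lt_succ_of_le (getD_le_headD hsort i))
  rw [← Fintype.card_subtype, DomMulAct.stabilizer_card', prod_subset hsub]
  · exact prod_congr rfl fun c _ => by rw [hcount]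
  · intro c _ hc
    rw [Fintype.card_eq_zero_iff.2 ⟨fun i => hc (mem_image.2 ⟨i.1, mem_univ _, i.2⟩)⟩,
      Nat.factorial_zero]

end PaddedTuple

section MonomialSymmetric

open Equiv

variable {n : ℕ} {μ : List ℕ}

theorem mSymQ_eq_sum_image (hsort : μ.SortedGE) (h0 : 0 ∉ μ) (hlen : μ.length ≤ n) :
    mSymQ n μ = ∑ p ∈ univ.image (fun w : Perm (Fin n) => paddedTuple n μ ∘ w),
      ∏ i, MvPolynomial.X i ^ p i := by
  have hreindex :
      ∑ w : Perm (Fin n), ∏ i, (MvPolynomial.X (w i) : MvPolynomial (Fin n) ℚ) ^ μ.getD i 0 =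
        ∑ w : Perm (Fin n), ∏ i, MvPolynomial.X i ^ (paddedTuple n μ ∘ w) i := by
    rw [← Equiv.sum_comp (Equiv.inv (Perm (Fin n)))]
    refine sum_congr rfl fun w _ => ?_
    rw [← Equiv.prod_comp w]
    simp [paddedTuple]
  have hK : ((#{w : Perm (Fin n) | paddedTuple n μ ∘ w = paddedTuple n μ} : ℕ) : ℚ) ≠ 0 :=
    Nat.cast_ne_zero.2 (card_ne_zero.2 ⟨1, by simp⟩)
  rw [mSymQ, hreindex, sum_comp_perm _ fun p => ∏ i, MvPolynomial.X i ^ p i,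
    ← card_stabilizer_paddedTuple hsort h0 hlen, nsmul_eq_mul, ← mul_assoc,
    ← map_natCast MvPolynomial.C, ← map_mul, inv_mul_cancel₀ hK, map_one, one_mul]

end MonomialSymmetric

section Shape

open Equiv

variable {n m : ℕ}

theorem filter_ne_zero_add_replicate (s : Multiset ℕ) :
    s.filter (· ≠ 0) + Multiset.replicate (s.card - (s.filter (· ≠ 0)).card) 0 = s := by
  have hs := Multiset.filter_add_not (· ≠ 0) s
  have hcard := congr_arg Multiset.card hs
  simp only [not_not, Multiset.filter_eq', Multiset.card_add, Multiset.card_replicate] at hs hcard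
  rw [show s.card - (s.filter (· ≠ 0)).card = Multiset.count 0 s by omega]
  exact hs

def shape (p : Fin n → ℕ) : List ℕ :=
  (Multiset.sort ((univ.val.map p).filter (· ≠ 0))).reverse

theorem shape_mem_partitionsOf (p : Fin n → ℕ) : shape p ∈ partitionsOf (∑ i, p i) :=
  mem_image.2 ⟨Nat.Partition.ofSums _ (univ.val.map p) rfl, mem_univ _, rfl⟩

theorem coe_shape (p : Fin n → ℕ) :
    (shape p : Multiset ℕ) = (univ.val.map p).filter (· ≠ 0) := by
  rw [shape, Multiset.coe_reverse, Multiset.sort_eq]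

theorem length_shape_le (p : Fin n → ℕ) : (shape p).length ≤ n := by
  rw [← Multiset.coe_card, coe_shape]
  exact (Multiset.card_le_card (Multiset.filter_le _ _)).trans (by simp)

theorem filter_shape_eq_image {μ : List ℕ} (hμ : μ ∈ partitionsOf m)
    (hlen : μ.length ≤ n) :
    {p ∈ Nat.antidiagonalTuple n m | shape p = μ} =
      univ.image (fun w : Perm (Fin n) => paddedTuple n μ ∘ w) := by
  ext p
  simp only [mem_filter, Nat.mem_antidiagonalTuple, mem_image, mem_univ, true_and]
  constructor
  · rintro ⟨-, hp⟩
    apply exists_perm_comp_eq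
    rw [map_univ_paddedTuple hlen, ← filter_ne_zero_add_replicate (univ.val.map p),
      ← coe_shape, hp]
    simp
  · rintro ⟨w, rfl⟩
    have hmap : univ.val.map (paddedTuple n μ ∘ w) =
        (μ : Multiset ℕ) + Multiset.replicate (n - μ.length) 0 := by
      rw [← Multiset.map_map, Multiset.map_univ_val_equiv, map_univ_paddedTuple hlen]
    refine ⟨?_, ?_⟩
    · rw [sum_eq_multiset_sum, hmap]
      simp [sum_of_mem_partitionsOf hμ]
    · have h0 := zero_notMem_of_mem_partitionsOf hμ
      rw [shape, hmap, Multiset.filter_add, Multiset.filter_eq_self.2 fun a ha => ?_,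
        Multiset.filter_eq_nil.2 fun a ha => ?_, add_zero,
        sort_coe_reverse_of_sortedGE (sortedGE_of_mem_partitionsOf hμ)]
      · exact fun h => h (Multiset.eq_of_mem_replicate ha)
      · rintro rfl
        exact h0 (Multiset.mem_coe.1 ha)

theorem sum_antidiagonalTuple_eq_sum_partitionsOf {M : Type*} [AddCommMonoid M]
    (g : (Fin n → ℕ) → M) (m : ℕ) :
    ∑ p ∈ Nat.antidiagonalTuple n m, g p =
      ∑ μ ∈ (partitionsOf m).filter (fun l => l.length ≤ n),
        ∑ p ∈ univ.image (fun w : Perm (Fin n) => paddedTuple n μ ∘ w), g p := by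
  rw [← sum_fiberwise_of_maps_to (g := shape)
    (t := (partitionsOf m).filter fun l => l.length ≤ n)]
  · refine sum_congr rfl fun μ hμ => ?_
    rw [mem_filter] at hμ
    rw [filter_shape_eq_image hμ.1 hμ.2]
  · intro p hp
    rw [Nat.mem_antidiagonalTuple] at hp
    exact mem_filter.2 ⟨hp ▸ shape_mem_partitionsOf p, length_shape_le p⟩

end Shape

section Expansion

open MvPowerSeries Equiv

variable {A : Type*} [CommRing A] {n : ℕ}

/-- The coefficient `q^{k(k-1)/2} / (q;q)_k` of `t^k` in Euler's series, with `q = X 0`. -/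
noncomputable def eulerCoeff (k : ℕ) : MvPowerSeries (Fin 2) A :=
  X 0 ^ k.choose 2 * invOfUnit (qPoch (X 0) k) 1

theorem eulerCoeff_zero : eulerCoeff 0 = (1 : MvPowerSeries (Fin 2) A) := by
  simpa [qPoch_zero, eulerCoeff] using qPoch_X_mul_invOfUnit (R := A) (0 : Fin 2) 0

theorem eulerCoeff_mem_freeOf (k : ℕ) : eulerCoeff k ∈ freeOf A (1 : Fin 2) :=
  mul_mem (pow_mem (X_mem_freeOf (by decide)) _)
    (invOfUnit_mem_freeOf (qPoch_X_mem_freeOf (by decide) k) 1)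

/-- The term indexed by `p` when `∏_i ∑_k eulerCoeff k * (x_i z)^k` is multiplied out,
with `z = X 1`. -/
noncomputable def eulerTerm (x : Fin n → A) (p : Fin n → ℕ) : MvPowerSeries (Fin 2) A :=
  ∏ i, (eulerCoeff (p i) * (C (x i) * X 1) ^ p i)

theorem eulerTerm_eq (x : Fin n → A) (p : Fin n → ℕ) :
    eulerTerm x p = X 1 ^ (∑ i, p i) * (∏ i, eulerCoeff (p i)) * C (∏ i, x i ^ p i) := by
  rw [eulerTerm, map_prod, ← prod_pow_eq_pow_sum, ← prod_mul_distrib, ← prod_mul_distrib]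
  refine prod_congr rfl fun i _ => ?_
  rw [map_pow]
  ring

theorem coeff_sum_eulerTerm (x : Fin n → A) {d : Fin 2 →₀ ℕ} {N : ℕ} (hN : d 1 < N) :
    coeff d (∑ p ∈ Fintype.piFinset fun _ : Fin n => range N, eulerTerm x p) =
      coeff d (∑ p ∈ Nat.antidiagonalTuple n (d 1), eulerTerm x p) := by
  have hfilter : {p ∈ Fintype.piFinset fun _ : Fin n => range N | ∑ i, p i = d 1} =
      Nat.antidiagonalTuple n (d 1) := by
    ext p
    simp only [mem_filter, Fintype.mem_piFinset, mem_range, Nat.mem_antidiagonalTuple,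
      and_iff_right_iff_imp]
    exact fun hp i =>
      (hp ▸ single_le_sum (fun j _ => Nat.zero_le (p j)) (mem_univ i)).trans_lt hN
  rw [map_sum, map_sum, ← hfilter, sum_filter_of_ne]
  intro p _ hp
  by_contra hne
  rw [eulerTerm_eq, mul_assoc] at hp
  exact hp (coeff_X_pow_mul_of_mem_freeOf
    (mul_mem (prod_mem fun i _ => eulerCoeff_mem_freeOf (p i)) (C_mem_freeOf _)) hne)

theorem sum_image_eulerTerm {m : ℕ} {μ : List ℕ} (hμ : μ ∈ partitionsOf m)
    (hlen : μ.length ≤ n) :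
    ∑ p ∈ univ.image (fun w : Perm (Fin n) => paddedTuple n μ ∘ w),
        eulerTerm MvPolynomial.X p =
      (X 0 : MvPowerSeries (Fin 2) (MvPolynomial (Fin n) ℚ)) ^
          (∑ i ∈ range μ.length, (μ.getD i 0).choose 2) * X 1 ^ μ.sum * C (mSymQ n μ) *
        invOfUnit (∏ i ∈ range μ.length, qPoch (X 0) (μ.getD i 0)) 1 := by
  set v := paddedTuple n μ
  have hsum : ∑ i, v i = μ.sum := by
    rw [sum_eq_multiset_sum, map_univ_paddedTuple hlen]
    simp
  have hprod : ∏ i, (eulerCoeff (v i) : MvPowerSeries (Fin 2) (MvPolynomial (Fin n) ℚ)) =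
      X 0 ^ (∑ i ∈ range μ.length, (μ.getD i 0).choose 2) *
        invOfUnit (∏ i ∈ range μ.length, qPoch (X 0) (μ.getD i 0)) 1 := by
    rw [prod_paddedTuple _ eulerCoeff_zero hlen,
      invOfUnit_prod _ _ fun i _ => constantCoeff_qPoch_X 0 _, ← prod_pow_eq_pow_sum,
      ← prod_mul_distrib]
    rfl
  have hterm : ∀ p ∈ univ.image (fun w : Perm (Fin n) => v ∘ w), eulerTerm MvPolynomial.X p =
      (X 1 : MvPowerSeries (Fin 2) (MvPolynomial (Fin n) ℚ)) ^ μ.sum *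
        (∏ i, eulerCoeff (v i)) *
        C (∏ i, (MvPolynomial.X i : MvPolynomial (Fin n) ℚ) ^ p i) := by
    intro p hp
    obtain ⟨w, -, rfl⟩ := mem_image.1 hp
    rw [eulerTerm_eq, ← hsum, Function.comp_def, Equiv.sum_comp w v,
      Equiv.prod_comp w fun i => eulerCoeff (v i)]
  rw [sum_congr rfl hterm, ← mul_sum, ← map_sum,
    ← mSymQ_eq_sum_image (sortedGE_of_mem_partitionsOf hμ)
      (zero_notMem_of_mem_partitionsOf hμ) hlen, hprod]
  ring

end Expansion

open MvPowerSeries in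
theorem stmt2_general (n : ℕ) (d : Fin 2 →₀ ℕ) (M : ℕ) (hM : d 0 < M) :
    MvPowerSeries.coeff (R := MvPolynomial (Fin n) ℚ) d
        (∏ i : Fin n, ∏ j ∈ Finset.range M,
          (1 + MvPowerSeries.C (σ := Fin 2) (R := MvPolynomial (Fin n) ℚ) (MvPolynomial.X i) *
              MvPowerSeries.X 1 * MvPowerSeries.X 0 ^ j)) =
      MvPowerSeries.coeff (R := MvPolynomial (Fin n) ℚ) d
        (∑ mu ∈ (partitionsOf (d 1)).filter (fun l => l.length ≤ n),
          MvPowerSeries.X 0 ^ (∑ i ∈ Finset.range mu.length, Nat.choose (mu.getD i 0) 2) *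
            MvPowerSeries.X 1 ^ mu.sum *
            MvPowerSeries.C (σ := Fin 2) (R := MvPolynomial (Fin n) ℚ) (mSymQ n mu) *
            MvPowerSeries.invOfUnit
              (∏ i ∈ Finset.range mu.length,
                ∏ j ∈ Finset.Icc 1 (mu.getD i 0), (1 - MvPowerSeries.X 0 ^ j)) 1) := by
  set N := M + (d 1 + 1)
  have htrunc : ∏ i : Fin n, ∏ j ∈ range M, (1 + C (MvPolynomial.X i) * X 1 * X 0 ^ j) ≡
      ∏ i : Fin n, ∑ k ∈ range N, eulerCoeff k * (C (MvPolynomial.X i) * X 1) ^ k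
        [SMOD Ideal.span {(X 0 : MvPowerSeries (Fin 2) (MvPolynomial (Fin n) ℚ)) ^ M}] :=
    SModEq.prod fun i _ => prod_one_add_mul_pow_sModEq (qPoch_X_mul_invOfUnit 0) (by omega)
  rw [coeff_eq_of_sModEq_X_pow htrunc hM, prod_univ_sum]
  refine (coeff_sum_eulerTerm MvPolynomial.X (by omega : d 1 < N)).trans ?_
  rw [sum_antidiagonalTuple_eq_sum_partitionsOf]
  refine congr_arg _ (sum_congr rfl fun μ hμ => ?_)
  rw [mem_filter] at hμ
  exact sum_image_eulerTerm hμ.1 hμ.2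

/-- In `ℚ[x_1,…,x_n][[q,z]]` (with `q = X 0`, `z = X 1`),
`∏_{i=1}^{n} ∏_{j=0}^{∞} (1 + z x_i q^j)
  = Σ_μ q^{n(μ')} z^{|μ|} m_μ(x) / ∏_i (q;q)_{μ_i}`,
the sum over all partitions `μ` with at most `n` parts: coefficientwise, each
coefficient of the (q-adically convergent) infinite product — computed from any
sufficiently large finite truncation of it — equals the corresponding coefficient
of the right-hand side (only the partitions `μ` with `|μ|` equal to the `z`-degree
of the coefficient contribute to it). -/
theorem stmt2 (n : ℕ) (hn : 1 ≤ n) (d : Fin 2 →₀ ℕ) (M : ℕ) (hM : d 0 < M) :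
    MvPowerSeries.coeff (R := MvPolynomial (Fin n) ℚ) d
        (∏ i : Fin n, ∏ j ∈ Finset.range M,
          (1 + MvPowerSeries.C (σ := Fin 2) (R := MvPolynomial (Fin n) ℚ) (MvPolynomial.X i) *
              MvPowerSeries.X 1 * MvPowerSeries.X 0 ^ j)) =
      MvPowerSeries.coeff (R := MvPolynomial (Fin n) ℚ) d
        (∑ mu ∈ (partitionsOf (d 1)).filter (fun l => l.length ≤ n),
          MvPowerSeries.X 0 ^ (∑ i ∈ Finset.range mu.length, Nat.choose (mu.getD i 0) 2) *
            MvPowerSeries.X 1 ^ mu.sum *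
            MvPowerSeries.C (σ := Fin 2) (R := MvPolynomial (Fin n) ℚ) (mSymQ n mu) *
            MvPowerSeries.invOfUnit
              (∏ i ∈ Finset.range mu.length,
                ∏ j ∈ Finset.Icc 1 (mu.getD i 0), (1 - MvPowerSeries.X 0 ^ j)) 1) :=
  stmt2_general n d M hM

end Stmt2

end KHL
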